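/- Let 𝓐=(A,δ^A,σ^A,τ^A) and 𝓑=(B,δ^B,σ^B,τ^B) be fuzzy automata over a complete residuated lattice 𝓛 and alphabet X, let E be a fuzzy equivalence relation that is a forward bisimulation on 𝓐 and F a fuzzy equivalence relation that is a forward bisimulation on 𝓑. Then there exists a uniform fuzzy relation φ between A and B that is a forward bisimulation with E_A^φ = E and E_B^φ = F if and only if there exists an isomorphism ϕ:𝓐/E→𝓑/F of the factor fuzzy automata such that Ẽ(E_{a₁},E_{a₂}) = F̃(ϕ(E_{a₁}),ϕ(E_{a₂})) for all a₁,a₂∈A. -/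
import Mathlib


universe u

/-- A complete residuated lattice: a complete lattice with a commutative monoid
structure whose unit is the top element, together with a residuum operation
forming an adjoint pair with the multiplication. -/
class CompleteResiduatedLattice (L : Type*) extends CompleteLattice L, CommMonoid L where
  /-- the residuum operation `→` -/
  res : L → L → L
  /-- the adjunction property -/
  adjunction : ∀ x y z : L, x * y ≤ z ↔ x ≤ res y z
  /-- the multiplicative unit `1` is the greatest element -/
  one_eq_top : (1 : L) = ⊤

namespace FuzzyAutomataBisim

/-- A fuzzy automaton over `L` and alphabet `X`, with state set `A`. -/
structure FuzzyAutomaton (L : Type*) [CompleteResiduatedLattice L] (X A : Type*) where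
  δ : A → X → A → L
  σ : A → L
  τ : A → L

variable {L X A B C : Type*} [CompleteResiduatedLattice L]

/-- biresiduum `x ↔ y = (x → y) ⊓ (y → x)` -/
def bires (x y : L) : L :=
  CompleteResiduatedLattice.res x y ⊓ CompleteResiduatedLattice.res y x

/-- inverse of a fuzzy relation -/
def inv (φ : A → B → L) : B → A → L := fun b a => φ a b

/-- composition of fuzzy relations -/
def rcomp (φ : A → B → L) (ψ : B → C → L) : A → C → L := fun a c => ⨆ b, φ a b * ψ b c

/-- composition of a fuzzy set with a fuzzy relation -/
def scomp (f : A → L) (φ : A → B → L) : B → L := fun b => ⨆ a, f a * φ a b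

/-- composition of a fuzzy relation with a fuzzy set -/
def rscomp (φ : A → B → L) (g : B → L) : A → L := fun a => ⨆ b, φ a b * g b

/-- degree of overlapping of two fuzzy sets -/
def sdot (f g : A → L) : L := ⨆ a, f a * g a

/-- kernel `E_A^φ` of a fuzzy relation -/
def ker (φ : A → B → L) : A → A → L := fun a₁ a₂ => ⨅ b, bires (φ a₁ b) (φ a₂ b)

/-- co-kernel `E_B^φ` of a fuzzy relation -/
def coker (φ : A → B → L) : B → B → L := fun b₁ b₂ => ⨅ a, bires (φ a b₁) (φ a b₂)

/-- `φ` is an `L`-function -/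
def IsLFun (φ : A → B → L) : Prop := ∀ a, ∃ b, φ a b = 1

/-- `φ` is surjective, i.e. `φ⁻¹` is an `L`-function -/
def IsSurj (φ : A → B → L) : Prop := ∀ b, ∃ a, φ a b = 1

/-- `φ` is a partial fuzzy function: `φ ∘ φ⁻¹ ∘ φ ≤ φ` -/
def IsPFF (φ : A → B → L) : Prop := rcomp (rcomp φ (inv φ)) φ ≤ φ

/-- `φ` is a uniform fuzzy relation: a partial fuzzy function that is a
surjective `L`-function -/
def IsUniform (φ : A → B → L) : Prop := IsPFF φ ∧ IsLFun φ ∧ IsSurj φ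

/-- the set of crisp descriptions of `φ` -/
def CR (φ : A → B → L) : Set (A → B) := {ψ | ∀ a, φ a (ψ a) = 1}

/-- `ψ : A → B` is `F`-surjective -/
def SurjMod (F : B → B → L) (ψ : A → B) : Prop := ∀ b, ∃ a, F (ψ a) b = 1

/-- fuzzy equivalence relation -/
structure IsFuzzyEquiv (E : A → A → L) : Prop where
  refl : ∀ a, E a a = 1
  symm : ∀ a b, E a b = E b a
  trans : ∀ a b c, E a b * E b c ≤ E a c

/-- fuzzy equality -/
def IsFuzzyEquality (E : A → A → L) : Prop :=
  IsFuzzyEquiv E ∧ ∀ a b, E a b = 1 → a = b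

/-- the factor set `A/E = {E_a : a ∈ A}` -/
abbrev FactorSet (E : A → A → L) := {f : A → L // ∃ a, E a = f}

/-- the class `E_a` as an element of `A/E` -/
def toClass (E : A → A → L) (a : A) : FactorSet E := ⟨E a, a, rfl⟩

/-- a chosen representative of a class -/
noncomputable def rep {E : A → A → L} (c : FactorSet E) : A := c.2.choose

/-- the fuzzy relation `Ẽ` on `A/E` -/
noncomputable def tildeRel (E : A → A → L) : FactorSet E → FactorSet E → L :=
  fun c c' => E (rep c) (rep c')

open Classical in
/-- a chosen crisp description of `φ` -/
noncomputable def crispDesc [Nonempty B] (φ : A → B → L) : A → B :=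
  fun a => if h : ∃ b, φ a b = 1 then h.choose else Classical.arbitrary B

/-- the induced map `φ̃ : A/E_A^φ → B/E_B^φ`, `φ̃(E_a) = F_{ψ(a)}` -/
noncomputable def tilde [Nonempty B] (φ : A → B → L) :
    FactorSet (ker φ) → FactorSet (coker φ) :=
  fun c => toClass (coker φ) (crispDesc φ (rep c))

/-- the fuzzy transition relation `δ_x` -/
def FuzzyAutomaton.δx (M : FuzzyAutomaton L X A) (x : X) : A → A → L := fun a b => M.δ a x b

open Classical in
/-- transitions extended to words -/
noncomputable def deltaWord (M : FuzzyAutomaton L X A) : List X → A → A → L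
  | [] => fun a b => if a = b then (1 : L) else ⊥
  | x :: u => rcomp (M.δx x) (deltaWord M u)

/-- the fuzzy language recognized by `M` : `L(M)(u) = σ ∘ δ_u ∘ τ` -/
noncomputable def lang (M : FuzzyAutomaton L X A) (u : List X) : L :=
  sdot (scomp M.σ (deltaWord M u)) M.τ

/-- forward simulation -/
def IsForwardSim (MA : FuzzyAutomaton L X A) (MB : FuzzyAutomaton L X B)
    (φ : A → B → L) : Prop :=
  MA.σ ≤ scomp MB.σ (inv φ) ∧
  (∀ x, rcomp (inv φ) (MA.δx x) ≤ rcomp (MB.δx x) (inv φ)) ∧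
  rscomp (inv φ) MA.τ ≤ MB.τ

/-- backward simulation -/
def IsBackwardSim (MA : FuzzyAutomaton L X A) (MB : FuzzyAutomaton L X B)
    (φ : A → B → L) : Prop :=
  scomp MA.σ φ ≤ MB.σ ∧
  (∀ x, rcomp (MA.δx x) φ ≤ rcomp φ (MB.δx x)) ∧
  MA.τ ≤ rscomp φ MB.τ

/-- forward bisimulation -/
def IsForwardBisim (MA : FuzzyAutomaton L X A) (MB : FuzzyAutomaton L X B)
    (φ : A → B → L) : Prop :=
  IsForwardSim MA MB φ ∧ IsForwardSim MB MA (inv φ)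

/-- backward bisimulation -/
def IsBackwardBisim (MA : FuzzyAutomaton L X A) (MB : FuzzyAutomaton L X B)
    (φ : A → B → L) : Prop :=
  IsBackwardSim MA MB φ ∧ IsBackwardSim MB MA (inv φ)

/-- backward-forward bisimulation -/
def IsBFBisim (MA : FuzzyAutomaton L X A) (MB : FuzzyAutomaton L X B)
    (φ : A → B → L) : Prop :=
  IsBackwardSim MA MB φ ∧ IsForwardSim MB MA (inv φ)

/-- forward-backward bisimulation -/
def IsFBBisim (MA : FuzzyAutomaton L X A) (MB : FuzzyAutomaton L X B)
    (φ : A → B → L) : Prop :=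
  IsForwardSim MA MB φ ∧ IsBackwardSim MB MA (inv φ)

/-- isomorphism of fuzzy automata -/
def IsIso (MA : FuzzyAutomaton L X A) (MB : FuzzyAutomaton L X B) (h : A → B) : Prop :=
  Function.Bijective h ∧
  (∀ (a₁ : A) (x : X) (a₂ : A), MA.δ a₁ x a₂ = MB.δ (h a₁) x (h a₂)) ∧
  (∀ a, MA.σ a = MB.σ (h a)) ∧
  (∀ a, MA.τ a = MB.τ (h a))

/-- the factor fuzzy automaton `𝓐/E` -/
noncomputable def factorAut (M : FuzzyAutomaton L X A) (E : A → A → L) :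
    FuzzyAutomaton L X (FactorSet E) where
  δ := fun c x c' => rcomp (rcomp E (M.δx x)) E (rep c) (rep c')
  σ := fun c => scomp M.σ E (rep c)
  τ := fun c => rscomp E M.τ (rep c)

/-- the natural fuzzy relation `φ(a₁, E_{a₂}) = E(a₁,a₂)` between `A` and `A/E` -/
def natRel (E : A → A → L) : A → FactorSet E → L := fun a c => c.1 a

/-- the fuzzy relation `G/E` on `A/E` -/
noncomputable def quotRel (E G : A → A → L) : FactorSet E → FactorSet E → L :=
  fun c c' => G (rep c) (rep c')

/-- the fuzzy relation `φ(a₁, E_{a₂}) = G(a₁,a₂)` between `A` and `A/E` -/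
noncomputable def quotNatRel (E G : A → A → L) : A → FactorSet E → L :=
  fun a c => G a (rep c)

/-- UFB-equivalence of fuzzy automata -/
def UFBEquiv (MA : FuzzyAutomaton L X A) (MB : FuzzyAutomaton L X B) : Prop :=
  ∃ φ : A → B → L, IsUniform φ ∧ IsForwardBisim MA MB φ

/-! ### Auxiliary lemmas -/

section Aux

open CompleteResiduatedLattice

lemma crl_le_one (x : L) : x ≤ 1 := by
  rw [CompleteResiduatedLattice.one_eq_top]; exact le_top

lemma crl_mul_le_mul {a b c d : L} (h1 : a ≤ b) (h2 : c ≤ d) : a * c ≤ b * d := by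
  have hb : b * c ≤ b * d := by
    rw [mul_comm b c, mul_comm b d]
    exact (adjunction c b (d * b)).mpr (h2.trans ((adjunction d b (d * b)).mp le_rfl))
  exact ((adjunction a c (b * c)).mpr (h1.trans ((adjunction b c (b * c)).mp le_rfl))).trans hb

lemma crl_mul_le_left (x y : L) : x * y ≤ x :=
  (crl_mul_le_mul (le_refl x) (crl_le_one y)).trans_eq (mul_one x)

lemma csup_mul {ι : Sort*} (f : ι → L) (x : L) : (⨆ i, f i) * x = ⨆ i, f i * x := by
  refine le_antisymm ?_ (iSup_le fun i => crl_mul_le_mul (le_iSup f i) le_rfl)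
  exact (adjunction _ _ _).mpr
    (iSup_le fun i => (adjunction _ _ _).mp (le_iSup (fun i => f i * x) i))

lemma mul_csup {ι : Sort*} (x : L) (f : ι → L) : (x * ⨆ i, f i) = ⨆ i, x * f i := by
  rw [mul_comm, csup_mul]
  exact iSup_congr fun i => mul_comm _ _

lemma le_bires_iff {x u v : L} : x ≤ bires u v ↔ x * u ≤ v ∧ x * v ≤ u := by
  rw [bires, le_inf_iff, ← adjunction, ← adjunction]

lemma bires_one_left (x : L) : bires 1 x = x := by
  have h1 : res 1 x = x := by
    refine le_antisymm ?_ ((adjunction x 1 x).mp (by rw [mul_one]))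
    have := (adjunction (res 1 x) 1 x).mpr le_rfl
    rwa [mul_one] at this
  have h2 : x ≤ res x 1 := (adjunction x x 1).mp (crl_le_one _)
  rw [bires, h1, inf_eq_left.mpr h2]

lemma IsFuzzyEquiv.trans' {E : A → A → L} (hE : IsFuzzyEquiv E) (a b c : A) :
    E b a * E b c ≤ E a c := by
  rw [hE.symm b a]; exact hE.trans a b c

lemma IsFuzzyEquiv.class_eq {E : A → A → L} (hE : IsFuzzyEquiv E) {a b : A}
    (h : E a b = 1) : E a = E b := by
  funext x
  refine le_antisymm ?_ ?_
  · calc E a x = E b a * E a x := by rw [hE.symm b a, h, one_mul]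
    _ ≤ E b x := hE.trans b a x
  · calc E b x = E a b * E b x := by rw [h, one_mul]
    _ ≤ E a x := hE.trans a b x

lemma IsFuzzyEquiv.iInf_bires {F : B → B → L} (hF : IsFuzzyEquiv F) (c₁ c₂ : B) :
    (⨅ b, bires (F c₁ b) (F c₂ b)) = F c₁ c₂ := by
  refine le_antisymm ?_ (le_iInf fun b => le_bires_iff.mpr ⟨?_, ?_⟩)
  · calc (⨅ b, bires (F c₁ b) (F c₂ b)) ≤ bires (F c₁ c₂) (F c₂ c₂) := iInf_le _ c₂
    _ = bires 1 (F c₁ c₂) := by rw [hF.refl, bires, bires, inf_comm]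
    _ = F c₁ c₂ := bires_one_left _
  · exact hF.trans' c₂ c₁ b
  · exact hF.trans c₁ c₂ b

lemma rep_spec {E : A → A → L} (c : FactorSet E) : E (rep c) = c.1 := c.2.choose_spec

lemma E_rep_toClass (E : A → A → L) (a : A) : E (rep (toClass E a)) = E a := rep_spec _

lemma rep_toClass_eval {E : A → A → L} (hE : IsFuzzyEquiv E) (u v : A) :
    E (rep (toClass E u)) (rep (toClass E v)) = E u v := by
  rw [congrFun (E_rep_toClass E u) (rep (toClass E v)),
    hE.symm u (rep (toClass E v)), congrFun (E_rep_toClass E v) u, hE.symm v u]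

lemma IsPFF.apply {φ : A → B → L} (hp : IsPFF φ) (a a' : A) (b b' : B) :
    φ a' b' * φ a b' * φ a b ≤ φ a' b := by
  refine le_trans ?_ (hp a' b)
  calc φ a' b' * φ a b' * φ a b
      ≤ rcomp φ (inv φ) a' a * φ a b :=
        crl_mul_le_mul (le_iSup (fun b'' => φ a' b'' * inv φ b'' a) b') le_rfl
    _ ≤ rcomp (rcomp φ (inv φ)) φ a' b :=
        le_iSup (fun a'' => rcomp φ (inv φ) a' a'' * φ a'' b) a

lemma crispDesc_spec [Nonempty B] {φ : A → B → L} (hf : IsLFun φ) (a : A) :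
    φ a (crispDesc φ a) = 1 := by
  unfold crispDesc
  rw [dif_pos (hf a)]
  exact (hf a).choose_spec

lemma rcomp3_eq {A B C D : Type*} (R : A → B → L) (d : B → C → L) (S : C → D → L)
    (a : A) (c : D) :
    rcomp (rcomp R d) S a c = ⨆ b', ⨆ b, R a b * d b b' * S b' c := by
  simp only [rcomp, csup_mul]

lemma rcomp3_invL {E : A → A → L} (hE : IsFuzzyEquiv E) (d : A → A → L) {r a r' a' : A}
    (h1 : E r = E a) (h2 : E r' = E a') :
    rcomp (rcomp E d) E r r' = rcomp (rcomp E d) E a a' := by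
  rw [rcomp3_eq, rcomp3_eq]
  refine iSup_congr fun b' => iSup_congr fun b => ?_
  rw [congrFun h1 b, hE.symm b' r', congrFun h2 b', hE.symm a' b']

lemma scomp_inv {E : A → A → L} (hE : IsFuzzyEquiv E) (σ : A → L) {r a : A}
    (h : E r = E a) : scomp σ E r = scomp σ E a := by
  unfold scomp
  refine iSup_congr fun a'' => ?_
  rw [hE.symm a'' r, congrFun h a'', hE.symm a a'']

lemma rscomp_inv {E : A → A → L} (τ : A → L) {r a : A} (h : E r = E a) :
    rscomp E τ r = rscomp E τ a := by
  unfold rscomp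
  exact iSup_congr fun b => by rw [congrFun h b]

end Aux

section Forward

variable {MA : FuzzyAutomaton L X A} {MB : FuzzyAutomaton L X B}
  {E : A → A → L} {F : B → B → L} {φ : A → B → L} {ψ : A → B}

/-- key transfer fact for transitions -/
lemma forward_delta (hE : IsFuzzyEquiv E) (hF : IsFuzzyEquiv F)
    (hB : IsForwardBisim MA MB φ)
    (phi_eq : ∀ a b, φ a b = F (ψ a) b)
    (E_eq : ∀ a₁ a₂, E a₁ a₂ = F (ψ a₁) (ψ a₂)) (x : X) (a₁ a₂ : A) :
    rcomp (rcomp E (MA.δx x)) E a₁ a₂ = rcomp (rcomp F (MB.δx x)) F (ψ a₁) (ψ a₂) := by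
  have Ftr : ∀ u v w : B, F u v * F u w ≤ F v w := fun u v w => hF.trans' v u w
  have keyE : ∀ a a' : A, E a a' = φ a' (ψ a) := by
    intro a a'
    rw [phi_eq, E_eq a a', hF.symm (ψ a) (ψ a')]
  have key1 : ∀ (a a' : A) (b : B), φ a' b * E a' a ≤ φ a b := by
    intro a a' b
    rw [phi_eq, phi_eq, E_eq a' a]
    calc F (ψ a') b * F (ψ a') (ψ a) ≤ F b (ψ a) := Ftr _ _ _
    _ = F (ψ a) b := hF.symm _ _
  have key2 : ∀ (a a' : A) (b : B), φ a' b * φ a b ≤ E a' a := by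
    intro a a' b
    rw [phi_eq, phi_eq, E_eq a' a]
    have h := Ftr b (ψ a') (ψ a)
    rwa [hF.symm b (ψ a'), hF.symm b (ψ a)] at h
  rw [rcomp3_eq, rcomp3_eq]
  refine le_antisymm (iSup_le fun a' => iSup_le fun a => ?_)
    (iSup_le fun b' => iSup_le fun b => ?_)
  · -- E a₁ a * δA a x a' * E a' a₂ ≤ RHS
    have s1 : E a₁ a * MA.δx x a a' ≤ rcomp (MB.δx x) (inv φ) (ψ a₁) a' := by
      rw [keyE a₁ a]
      exact le_trans (le_iSup (fun a₀ => inv φ (ψ a₁) a₀ * MA.δx x a₀ a') a)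
        (hB.1.2.1 x (ψ a₁) a')
    calc E a₁ a * MA.δx x a a' * E a' a₂
        ≤ rcomp (MB.δx x) (inv φ) (ψ a₁) a' * E a' a₂ := crl_mul_le_mul s1 le_rfl
      _ = ⨆ b'', MB.δx x (ψ a₁) b'' * inv φ b'' a' * E a' a₂ := by
          simp only [rcomp, csup_mul]
      _ ≤ ⨆ b₀, ⨆ b, F (ψ a₁) b * MB.δx x b b₀ * F b₀ (ψ a₂) := by
          refine iSup_le fun b'' => ?_
          have t1 : φ a' b'' * E a' a₂ ≤ F b'' (ψ a₂) := by
            rw [phi_eq, E_eq a' a₂]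
            exact Ftr (ψ a') b'' (ψ a₂)
          refine le_iSup_of_le b'' (le_iSup_of_le (ψ a₁) ?_)
          calc MB.δx x (ψ a₁) b'' * inv φ b'' a' * E a' a₂
              = MB.δx x (ψ a₁) b'' * (φ a' b'' * E a' a₂) := mul_assoc _ _ _
            _ ≤ MB.δx x (ψ a₁) b'' * F b'' (ψ a₂) := crl_mul_le_mul le_rfl t1
            _ = F (ψ a₁) (ψ a₁) * MB.δx x (ψ a₁) b'' * F b'' (ψ a₂) := by
                rw [hF.refl, one_mul]
  · -- F (ψ a₁) b * δB b x b' * F b' (ψ a₂) ≤ LHS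
    have s2 : F (ψ a₁) b * MB.δx x b b' ≤ rcomp (MA.δx x) (inv (inv φ)) a₁ b' := by
      rw [← phi_eq]
      exact le_trans (le_iSup (fun b₀ => inv (inv φ) a₁ b₀ * MB.δx x b₀ b') b)
        (hB.2.2.1 x a₁ b')
    calc F (ψ a₁) b * MB.δx x b b' * F b' (ψ a₂)
        ≤ rcomp (MA.δx x) (inv (inv φ)) a₁ b' * F b' (ψ a₂) := crl_mul_le_mul s2 le_rfl
      _ = ⨆ a', MA.δx x a₁ a' * inv (inv φ) a' b' * F b' (ψ a₂) := by
          simp only [rcomp, csup_mul]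
      _ ≤ ⨆ a₀, ⨆ a, E a₁ a * MA.δx x a a₀ * E a₀ a₂ := by
          refine iSup_le fun a' => ?_
          have t2 : φ a' b' * F b' (ψ a₂) ≤ E a' a₂ := by
            rw [hF.symm b' (ψ a₂), ← phi_eq]
            exact key2 a₂ a' b'
          refine le_iSup_of_le a' (le_iSup_of_le a₁ ?_)
          calc MA.δx x a₁ a' * inv (inv φ) a' b' * F b' (ψ a₂)
              = MA.δx x a₁ a' * (φ a' b' * F b' (ψ a₂)) := mul_assoc _ _ _
            _ ≤ MA.δx x a₁ a' * E a' a₂ := crl_mul_le_mul le_rfl t2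
            _ = E a₁ a₁ * MA.δx x a₁ a' * E a' a₂ := by rw [hE.refl, one_mul]

/-- key transfer fact for initial fuzzy sets -/
lemma forward_sigma (hE : IsFuzzyEquiv E) (hF : IsFuzzyEquiv F)
    (hB : IsForwardBisim MA MB φ)
    (phi_eq : ∀ a b, φ a b = F (ψ a) b)
    (E_eq : ∀ a₁ a₂, E a₁ a₂ = F (ψ a₁) (ψ a₂)) (a : A) :
    scomp MA.σ E a = scomp MB.σ F (ψ a) := by
  have Ftr : ∀ u v w : B, F u v * F u w ≤ F v w := fun u v w => hF.trans' v u w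
  refine le_antisymm (iSup_le fun a' => ?_) (iSup_le fun b => ?_)
  · have t1 : ∀ b, φ a' b * E a' a ≤ F b (ψ a) := by
      intro b
      rw [phi_eq, E_eq a' a]
      exact Ftr (ψ a') b (ψ a)
    calc MA.σ a' * E a' a
        ≤ (⨆ b, MB.σ b * inv φ b a') * E a' a := crl_mul_le_mul (hB.1.1 a') le_rfl
      _ = ⨆ b, MB.σ b * inv φ b a' * E a' a := csup_mul _ _
      _ ≤ scomp MB.σ F (ψ a) := by
          refine iSup_le fun b => ?_
          refine le_iSup_of_le b ?_
          calc MB.σ b * inv φ b a' * E a' a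
              = MB.σ b * (φ a' b * E a' a) := mul_assoc _ _ _
            _ ≤ MB.σ b * F b (ψ a) := crl_mul_le_mul le_rfl (t1 b)
  · have t2 : ∀ a', φ a' b * F b (ψ a) ≤ E a' a := by
      intro a'
      rw [phi_eq, E_eq a' a, hF.symm (ψ a') b]
      exact Ftr b (ψ a') (ψ a)
    calc MB.σ b * F b (ψ a)
        ≤ (⨆ a', MA.σ a' * inv (inv φ) a' b) * F b (ψ a) :=
          crl_mul_le_mul (hB.2.1 b) le_rfl
      _ = ⨆ a', MA.σ a' * inv (inv φ) a' b * F b (ψ a) := csup_mul _ _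
      _ ≤ scomp MA.σ E a := by
          refine iSup_le fun a' => ?_
          refine le_iSup_of_le a' ?_
          calc MA.σ a' * inv (inv φ) a' b * F b (ψ a)
              = MA.σ a' * (φ a' b * F b (ψ a)) := mul_assoc _ _ _
            _ ≤ MA.σ a' * E a' a := crl_mul_le_mul le_rfl (t2 a')

/-- key transfer fact for final fuzzy sets -/
lemma forward_tau (hE : IsFuzzyEquiv E) (hF : IsFuzzyEquiv F)
    (hB : IsForwardBisim MA MB φ)
    (phi_eq : ∀ a b, φ a b = F (ψ a) b)
    (E_eq : ∀ a₁ a₂, E a₁ a₂ = F (ψ a₁) (ψ a₂)) (a : A) :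
    rscomp E MA.τ a = rscomp F MB.τ (ψ a) := by
  have keyE : ∀ a a' : A, E a a' = φ a' (ψ a) := by
    intro a a'
    rw [phi_eq, E_eq a a', hF.symm (ψ a) (ψ a')]
  refine le_antisymm (iSup_le fun a' => ?_) (iSup_le fun b => ?_)
  · calc E a a' * MA.τ a'
        ≤ rscomp (inv φ) MA.τ (ψ a) := by
          rw [keyE a a']
          exact le_iSup (fun a₀ => inv φ (ψ a) a₀ * MA.τ a₀) a'
      _ ≤ MB.τ (ψ a) := hB.1.2.2 (ψ a)
      _ = F (ψ a) (ψ a) * MB.τ (ψ a) := by rw [hF.refl, one_mul]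
      _ ≤ rscomp F MB.τ (ψ a) := le_iSup (fun b => F (ψ a) b * MB.τ b) (ψ a)
  · calc F (ψ a) b * MB.τ b
        ≤ rscomp (inv (inv φ)) MB.τ a := by
          rw [← phi_eq]
          exact le_iSup (fun b₀ => inv (inv φ) a b₀ * MB.τ b₀) b
      _ ≤ MA.τ a := hB.2.2.2 a
      _ = E a a * MA.τ a := by rw [hE.refl, one_mul]
      _ ≤ rscomp E MA.τ a := le_iSup (fun a' => E a a' * MA.τ a') a

end Forward

section Backward

variable {MA : FuzzyAutomaton L X A} {MB : FuzzyAutomaton L X B}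
  {E : A → A → L} {F : B → B → L}

/-- construction of a uniform forward bisimulation from a map `g` realizing an
isomorphism of the factor automata -/
lemma backward_aux (hE : IsFuzzyEquiv E) (hF : IsFuzzyEquiv F)
    (hEδ : ∀ x, rcomp (inv E) (MA.δx x) ≤ rcomp (MA.δx x) (inv E))
    (hFδ : ∀ x, rcomp (inv F) (MB.δx x) ≤ rcomp (MB.δx x) (inv F))
    (hFτ : rscomp (inv F) MB.τ ≤ MB.τ)
    (hEτ : rscomp (inv E) MA.τ ≤ MA.τ) (g : A → B)
    (g2 : ∀ b, ∃ a, F (g a) b = 1)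
    (g3 : ∀ a a', F (g a) (g a') = E a a')
    (g4 : ∀ x a a', rcomp (rcomp E (MA.δx x)) E a a'
        = rcomp (rcomp F (MB.δx x)) F (g a) (g a'))
    (g5 : ∀ a, scomp MA.σ E a = scomp MB.σ F (g a))
    (g6 : ∀ a, rscomp E MA.τ a = rscomp F MB.τ (g a)) :
    ∃ φ : A → B → L, IsUniform φ ∧ IsForwardBisim MA MB φ ∧
      ker φ = E ∧ coker φ = F := by
  have Ftr : ∀ u v w : B, F u v * F u w ≤ F v w := fun u v w => hF.trans' v u w
  have Etr : ∀ u v w : A, E u v * E u w ≤ E v w := fun u v w => hE.trans' v u w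
  refine ⟨fun a b => F (g a) b, ⟨?_, fun a => ⟨g a, hF.refl (g a)⟩, g2⟩,
    ⟨⟨?_, ?_, ?_⟩, ⟨?_, ?_, ?_⟩⟩, ?_, ?_⟩
  · -- IsPFF
    intro a' b
    rw [rcomp3_eq]
    refine iSup_le fun a => iSup_le fun b' => ?_
    show F (g a') b' * F (g a) b' * F (g a) b ≤ F (g a') b
    calc F (g a') b' * F (g a) b' * F (g a) b
        ≤ F (g a') (g a) * F (g a) b := by
          refine crl_mul_le_mul ?_ le_rfl
          have h := Ftr b' (g a') (g a)
          rwa [hF.symm b' (g a'), hF.symm b' (g a)] at h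
      _ ≤ F (g a') b := hF.trans _ _ _
  · -- σ forward
    intro a
    calc MA.σ a = MA.σ a * E a a := by rw [hE.refl, mul_one]
      _ ≤ scomp MA.σ E a := le_iSup (fun a' => MA.σ a' * E a' a) a
      _ = scomp MB.σ F (g a) := g5 a
      _ ≤ ⨆ b, MB.σ b * F (g a) b := by
          refine iSup_le fun b => ?_
          rw [hF.symm b (g a)]
          exact le_iSup (fun b => MB.σ b * F (g a) b) b
  · -- δ forward : inv φ ∘ δA ≤ δB ∘ inv φ
    intro x b a'
    refine iSup_le fun a => ?_
    show F (g a) b * MA.δx x a a' ≤ _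
    have base : MA.δx x a a' ≤ rcomp (rcomp F (MB.δx x)) F (g a) (g a') := by
      rw [← g4, rcomp3_eq]
      refine le_iSup_of_le a' (le_iSup_of_le a ?_)
      rw [hE.refl, hE.refl, one_mul, mul_one]
    calc F (g a) b * MA.δx x a a'
        ≤ F (g a) b * rcomp (rcomp F (MB.δx x)) F (g a) (g a') :=
          crl_mul_le_mul le_rfl base
      _ = F (g a) b * ⨆ c', ⨆ c, F (g a) c * MB.δx x c c' * F c' (g a') := by
          rw [rcomp3_eq]
      _ = ⨆ c', ⨆ c, F (g a) b * (F (g a) c * MB.δx x c c' * F c' (g a')) := by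
          rw [mul_csup]
          exact iSup_congr fun c' => mul_csup _ _
      _ ≤ ⨆ b', MB.δx x b b' * F (g a') b' := by
          refine iSup_le fun c' => iSup_le fun c => ?_
          have t3 : F b c * MB.δx x c c' ≤ ⨆ b', MB.δx x b b' * F c' b' := by
            calc F b c * MB.δx x c c' = F c b * MB.δx x c c' := by rw [hF.symm b c]
              _ ≤ rcomp (inv F) (MB.δx x) b c' :=
                  le_iSup (fun c₀ => inv F b c₀ * MB.δx x c₀ c') c
              _ ≤ rcomp (MB.δx x) (inv F) b c' := hFδ x b c'
          calc F (g a) b * (F (g a) c * MB.δx x c c' * F c' (g a'))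
              = F (g a) b * F (g a) c * MB.δx x c c' * F c' (g a') := by
                rw [← mul_assoc, ← mul_assoc]
            _ ≤ F b c * MB.δx x c c' * F c' (g a') :=
                crl_mul_le_mul (crl_mul_le_mul (Ftr (g a) b c) le_rfl) le_rfl
            _ ≤ (⨆ b', MB.δx x b b' * F c' b') * F c' (g a') :=
                crl_mul_le_mul t3 le_rfl
            _ = ⨆ b', MB.δx x b b' * F c' b' * F c' (g a') := csup_mul _ _
            _ ≤ ⨆ b', MB.δx x b b' * F (g a') b' := by
                refine iSup_le fun b' => le_iSup_of_le b' ?_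
                calc MB.δx x b b' * F c' b' * F c' (g a')
                    = MB.δx x b b' * (F c' b' * F c' (g a')) := mul_assoc _ _ _
                  _ ≤ MB.δx x b b' * F b' (g a') :=
                      crl_mul_le_mul le_rfl (Ftr c' b' (g a'))
                  _ = MB.δx x b b' * F (g a') b' := by rw [hF.symm b' (g a')]
  · -- τ forward : inv φ ∘ τA ≤ τB
    intro b
    refine iSup_le fun a => ?_
    show F (g a) b * MA.τ a ≤ MB.τ b
    have ht : MA.τ a ≤ rscomp E MA.τ a := by
      refine le_iSup_of_le a ?_
      rw [hE.refl, one_mul]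
    calc F (g a) b * MA.τ a
        ≤ F (g a) b * rscomp F MB.τ (g a) :=
          crl_mul_le_mul le_rfl (ht.trans_eq (g6 a))
      _ = ⨆ b', F (g a) b * (F (g a) b' * MB.τ b') := by
          rw [rscomp, mul_csup]
      _ ≤ rscomp (inv F) MB.τ b := by
          refine iSup_le fun b' => le_iSup_of_le b' ?_
          show _ ≤ F b' b * MB.τ b'
          calc F (g a) b * (F (g a) b' * MB.τ b')
              = F (g a) b * F (g a) b' * MB.τ b' := (mul_assoc _ _ _).symm
            _ ≤ F b b' * MB.τ b' := crl_mul_le_mul (Ftr (g a) b b') le_rfl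
            _ = F b' b * MB.τ b' := by rw [hF.symm b b']
      _ ≤ MB.τ b := hFτ b
  · -- σ backward
    intro b
    obtain ⟨a₀, ha₀⟩ := g2 b
    have hb₀ : F b (g a₀) = 1 := by rw [hF.symm b (g a₀)]; exact ha₀
    calc MB.σ b = MB.σ b * F b b := by rw [hF.refl, mul_one]
      _ ≤ scomp MB.σ F b := le_iSup (fun c => MB.σ c * F c b) b
      _ ≤ scomp MB.σ F (g a₀) := by
          refine iSup_le fun c => le_iSup_of_le c ?_
          refine crl_mul_le_mul le_rfl ?_
          calc F c b = F c b * F b (g a₀) := by rw [hb₀, mul_one]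
            _ ≤ F c (g a₀) := hF.trans _ _ _
      _ = scomp MA.σ E a₀ := (g5 a₀).symm
      _ ≤ ⨆ a, MA.σ a * F (g a) b := by
          refine iSup_le fun a => le_iSup_of_le a ?_
          refine crl_mul_le_mul le_rfl ?_
          calc E a a₀ = F (g a) (g a₀) * F (g a₀) b := by rw [ha₀, mul_one, g3]
            _ ≤ F (g a) b := hF.trans _ _ _
  · -- δ backward : φ ∘ δB ≤ δA ∘ φ
    intro x a b'
    obtain ⟨a'', ha''⟩ := g2 b'
    refine iSup_le fun b => ?_
    show F (g a) b * MB.δx x b b' ≤ _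
    have step1 : F (g a) b * MB.δx x b b' ≤ rcomp (MB.δx x) (inv F) (g a) b' := by
      calc F (g a) b * MB.δx x b b'
          = F b (g a) * MB.δx x b b' := by rw [hF.symm (g a) b]
        _ ≤ rcomp (inv F) (MB.δx x) (g a) b' :=
            le_iSup (fun c => inv F (g a) c * MB.δx x c b') b
        _ ≤ rcomp (MB.δx x) (inv F) (g a) b' := hFδ x (g a) b'
    have step2 : rcomp (MB.δx x) (inv F) (g a) b'
        ≤ rcomp (rcomp F (MB.δx x)) F (g a) (g a'') := by
      rw [rcomp3_eq]
      refine iSup_le fun c' => le_iSup_of_le c' (le_iSup_of_le (g a) ?_)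
      have h1 : F b' c' ≤ F c' (g a'') := by
        calc F b' c' = F b' c' * F b' (g a'') := by
              rw [hF.symm b' (g a''), ha'', mul_one]
          _ ≤ F c' (g a'') := Ftr b' c' (g a'')
      show MB.δx x (g a) c' * F b' c' ≤ _
      calc MB.δx x (g a) c' * F b' c'
          ≤ MB.δx x (g a) c' * F c' (g a'') := crl_mul_le_mul le_rfl h1
        _ = F (g a) (g a) * MB.δx x (g a) c' * F c' (g a'') := by
            rw [hF.refl, one_mul]
    have step3 : rcomp (rcomp F (MB.δx x)) F (g a) (g a'')
        ≤ ⨆ a', MA.δx x a a' * F (g a') b' := by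
      rw [← g4 x a a'', rcomp3_eq]
      refine iSup_le fun a₀' => iSup_le fun a₀ => ?_
      have s1 : E a a₀ * MA.δx x a₀ a₀' ≤ rcomp (MA.δx x) (inv E) a a₀' := by
        calc E a a₀ * MA.δx x a₀ a₀'
            = E a₀ a * MA.δx x a₀ a₀' := by rw [hE.symm a a₀]
          _ ≤ rcomp (inv E) (MA.δx x) a a₀' :=
              le_iSup (fun c => inv E a c * MA.δx x c a₀') a₀
          _ ≤ rcomp (MA.δx x) (inv E) a a₀' := hEδ x a a₀'
      calc E a a₀ * MA.δx x a₀ a₀' * E a₀' a''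
          ≤ rcomp (MA.δx x) (inv E) a a₀' * E a₀' a'' := crl_mul_le_mul s1 le_rfl
        _ = ⨆ a', MA.δx x a a' * inv E a' a₀' * E a₀' a'' := by
            simp only [rcomp, csup_mul]
        _ ≤ ⨆ a', MA.δx x a a' * F (g a') b' := by
            refine iSup_le fun a' => le_iSup_of_le a' ?_
            have h2 : E a' a'' ≤ F (g a') b' := by
              calc E a' a'' = F (g a') (g a'') * F (g a'') b' := by
                    rw [ha'', mul_one, g3]
                _ ≤ F (g a') b' := hF.trans _ _ _
            calc MA.δx x a a' * inv E a' a₀' * E a₀' a''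
                = MA.δx x a a' * (E a₀' a' * E a₀' a'') := mul_assoc _ _ _
              _ ≤ MA.δx x a a' * E a' a'' := crl_mul_le_mul le_rfl (Etr a₀' a' a'')
              _ ≤ MA.δx x a a' * F (g a') b' := crl_mul_le_mul le_rfl h2
    exact (step1.trans step2).trans step3
  · -- τ backward : φ ∘ τB ≤ τA
    intro a
    refine iSup_le fun b => ?_
    show F (g a) b * MB.τ b ≤ MA.τ a
    calc F (g a) b * MB.τ b
        ≤ rscomp F MB.τ (g a) := le_iSup (fun b' => F (g a) b' * MB.τ b') b
      _ = rscomp E MA.τ a := (g6 a).symm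
      _ ≤ rscomp (inv E) MA.τ a := by
          refine iSup_le fun a' => le_iSup_of_le a' ?_
          rw [hE.symm a a']
          exact le_rfl
      _ ≤ MA.τ a := hEτ a
  · -- ker = E
    funext a₁ a₂
    show (⨅ b, bires (F (g a₁) b) (F (g a₂) b)) = E a₁ a₂
    rw [hF.iInf_bires]
    exact g3 a₁ a₂
  · -- coker = F
    funext b₁ b₂
    show (⨅ a, bires (F (g a) b₁) (F (g a) b₂)) = F b₁ b₂
    refine le_antisymm ?_ (le_iInf fun a => le_bires_iff.mpr ⟨?_, ?_⟩)
    · obtain ⟨a₀, ha₀⟩ := g2 b₁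
      calc (⨅ a, bires (F (g a) b₁) (F (g a) b₂))
          ≤ bires (F (g a₀) b₁) (F (g a₀) b₂) := iInf_le _ a₀
        _ = F (g a₀) b₂ := by rw [ha₀, bires_one_left]
        _ = F b₁ (g a₀) * F (g a₀) b₂ := by rw [hF.symm b₁ (g a₀), ha₀, one_mul]
        _ ≤ F b₁ b₂ := hF.trans _ _ _
    · rw [mul_comm]
      exact hF.trans _ _ _
    · rw [mul_comm, hF.symm b₁ b₂]
      exact hF.trans _ _ _

end Backward

/-- existence of a uniform forward bisimulation with given
kernel and co-kernel -/
theorem exists_uniform_forwardBisim_iff {L X A B : Type*} [CompleteResiduatedLattice L]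
    [Nonempty A] [Nonempty B]
    (MA : FuzzyAutomaton L X A) (MB : FuzzyAutomaton L X B)
    (E : A → A → L) (F : B → B → L)
    (hE : IsFuzzyEquiv E) (hEfb : IsForwardBisim MA MA E)
    (hF : IsFuzzyEquiv F) (hFfb : IsForwardBisim MB MB F) :
    (∃ φ : A → B → L, IsUniform φ ∧ IsForwardBisim MA MB φ ∧
        ker φ = E ∧ coker φ = F) ↔
    (∃ ϕ : FactorSet E → FactorSet F,
        IsIso (factorAut MA E) (factorAut MB F) ϕ ∧
        ∀ a₁ a₂ : A,
          tildeRel E (toClass E a₁) (toClass E a₂) =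
            tildeRel F (ϕ (toClass E a₁)) (ϕ (toClass E a₂))) := by
  constructor
  · rintro ⟨φ, ⟨hp, hlf, hsurj⟩, hB, hker, hco⟩
    set ψ := crispDesc φ with hψdef
    have hψ : ∀ a, φ a (ψ a) = 1 := crispDesc_spec hlf
    have phi_eq : ∀ a b, φ a b = F (ψ a) b := by
      intro a b
      rw [← hco]
      show φ a b = ⨅ a', bires (φ a' (ψ a)) (φ a' b)
      refine le_antisymm (le_iInf fun a' => le_bires_iff.mpr ⟨?_, ?_⟩) ?_
      · have h := hp.apply a a' b (ψ a)
        rw [hψ, mul_one] at h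
        calc φ a b * φ a' (ψ a) = φ a' (ψ a) * φ a b := mul_comm _ _
          _ ≤ φ a' b := h
      · have h := hp.apply a a' (ψ a) b
        rw [hψ, mul_one] at h
        calc φ a b * φ a' b = φ a' b * φ a b := mul_comm _ _
          _ ≤ φ a' (ψ a) := h
      · calc (⨅ a', bires (φ a' (ψ a)) (φ a' b))
            ≤ bires (φ a (ψ a)) (φ a b) := iInf_le _ a
          _ = φ a b := by rw [hψ, bires_one_left]
    have E_eq : ∀ a₁ a₂, E a₁ a₂ = F (ψ a₁) (ψ a₂) := by
      intro a₁ a₂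
      rw [← hker]
      show (⨅ b, bires (φ a₁ b) (φ a₂ b)) = F (ψ a₁) (ψ a₂)
      simp only [phi_eq]
      exact hF.iInf_bires _ _
    refine ⟨fun c => toClass F (ψ (rep c)), ⟨⟨?_, ?_⟩, ?_, ?_, ?_⟩, ?_⟩
    · -- injective
      intro c₁ c₂ h
      have h1 : F (ψ (rep c₁)) = F (ψ (rep c₂)) := congrArg Subtype.val h
      have h2 : E (rep c₁) (rep c₂) = 1 := by
        rw [E_eq, congrFun h1 (ψ (rep c₂))]
        exact hF.refl _
      exact Subtype.ext (by rw [← rep_spec c₁, ← rep_spec c₂, hE.class_eq h2])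
    · -- surjective
      intro d
      obtain ⟨a, ha⟩ := hsurj (rep d)
      refine ⟨toClass E a, Subtype.ext ?_⟩
      show F (ψ (rep (toClass E a))) = d.1
      have hra : E a (rep (toClass E a)) = 1 := by
        rw [hE.symm a (rep (toClass E a)), congrFun (E_rep_toClass E a) a]
        exact hE.refl a
      have h1 : F (ψ a) (ψ (rep (toClass E a))) = 1 := by
        rw [← E_eq]; exact hra
      have h2 : F (ψ a) (rep d) = 1 := by rw [← phi_eq]; exact ha
      calc F (ψ (rep (toClass E a))) = F (ψ a) := (hF.class_eq h1).symm
        _ = F (rep d) := hF.class_eq h2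
        _ = d.1 := rep_spec d
    · -- δ condition
      intro c₁ x c₂
      show rcomp (rcomp E (MA.δx x)) E (rep c₁) (rep c₂)
          = rcomp (rcomp F (MB.δx x)) F
              (rep (toClass F (ψ (rep c₁)))) (rep (toClass F (ψ (rep c₂))))
      rw [rcomp3_invL hF (MB.δx x) (E_rep_toClass F (ψ (rep c₁)))
        (E_rep_toClass F (ψ (rep c₂)))]
      exact forward_delta hE hF hB phi_eq E_eq x (rep c₁) (rep c₂)
    · -- σ condition
      intro c
      show scomp MA.σ E (rep c) = scomp MB.σ F (rep (toClass F (ψ (rep c))))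
      rw [scomp_inv hF MB.σ (E_rep_toClass F (ψ (rep c)))]
      exact forward_sigma hE hF hB phi_eq E_eq (rep c)
    · -- τ condition
      intro c
      show rscomp E MA.τ (rep c) = rscomp F MB.τ (rep (toClass F (ψ (rep c))))
      rw [rscomp_inv MB.τ (E_rep_toClass F (ψ (rep c)))]
      exact forward_tau hE hF hB phi_eq E_eq (rep c)
    · -- tilde condition
      intro a₁ a₂
      show E (rep (toClass E a₁)) (rep (toClass E a₂))
          = F (rep (toClass F (ψ (rep (toClass E a₁)))))
              (rep (toClass F (ψ (rep (toClass E a₂)))))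
      rw [rep_toClass_eval hF (ψ (rep (toClass E a₁))) (ψ (rep (toClass E a₂))),
        ← E_eq, rep_toClass_eval hE a₁ a₂]
  · rintro ⟨ϕ, ⟨⟨hinj, hsur⟩, hδ, hσ, hτ⟩, hcomm⟩
    have g3 : ∀ a a', F (rep (ϕ (toClass E a))) (rep (ϕ (toClass E a'))) = E a a' := by
      intro a a'
      calc F (rep (ϕ (toClass E a))) (rep (ϕ (toClass E a')))
          = tildeRel E (toClass E a) (toClass E a') := (hcomm a a').symm
        _ = E a a' := rep_toClass_eval hE a a'
    have g2 : ∀ b, ∃ a, F (rep (ϕ (toClass E a))) b = 1 := by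
      intro b
      obtain ⟨c, hc⟩ := hsur (toClass F b)
      refine ⟨rep c, ?_⟩
      have hcc : toClass E (rep c) = c := Subtype.ext (rep_spec c)
      have h1 : F (rep (ϕ (toClass E (rep c)))) = F b := by
        rw [hcc, hc]
        exact E_rep_toClass F b
      rw [congrFun h1 b]
      exact hF.refl b
    have g4 : ∀ x a a', rcomp (rcomp E (MA.δx x)) E a a'
        = rcomp (rcomp F (MB.δx x)) F (rep (ϕ (toClass E a))) (rep (ϕ (toClass E a'))) := by
      intro x a a'
      have h : rcomp (rcomp E (MA.δx x)) E (rep (toClass E a)) (rep (toClass E a'))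
          = rcomp (rcomp F (MB.δx x)) F (rep (ϕ (toClass E a))) (rep (ϕ (toClass E a'))) :=
        hδ (toClass E a) x (toClass E a')
      rw [← h, rcomp3_invL hE (MA.δx x) (E_rep_toClass E a) (E_rep_toClass E a')]
    have g5 : ∀ a, scomp MA.σ E a = scomp MB.σ F (rep (ϕ (toClass E a))) := by
      intro a
      have h : scomp MA.σ E (rep (toClass E a)) = scomp MB.σ F (rep (ϕ (toClass E a))) :=
        hσ (toClass E a)
      rw [← h, scomp_inv hE MA.σ (E_rep_toClass E a)]
    have g6 : ∀ a, rscomp E MA.τ a = rscomp F MB.τ (rep (ϕ (toClass E a))) := by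
      intro a
      have h : rscomp E MA.τ (rep (toClass E a)) = rscomp F MB.τ (rep (ϕ (toClass E a))) :=
        hτ (toClass E a)
      rw [← h, rscomp_inv MA.τ (E_rep_toClass E a)]
    exact backward_aux hE hF hEfb.1.2.1 hFfb.1.2.1 hFfb.1.2.2 hEfb.1.2.2
      (fun a => rep (ϕ (toClass E a))) g2 g3 g4 g5 g6

end FuzzyAutomataBisim
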